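/- Every element of GL(2,ℤ) of finite order has order at most 6, and there are exactly 7 conjugacy classes of pairs {A, A⁻¹} of finite-order elements in GL(2,ℤ), represented by the identity, −I, diag(1,−1), the transposition matrix [[0,1],[1,0]], the rotation matrix [[0,−1],[1,0]] of order 4, the matrix [[0,−1],[1,−1]] of order 3, and the matrix [[1,−1],[1,0]] of order 6. -/

import Mathlib

abbrev M2 := Matrix (Fin 2) (Fin 2) ℤ
abbrev GL2 := Matrix.GeneralLinearGroup (Fin 2) ℤ

lemma form_pos {p q r : ℤ} (hp : 0 < p) (hD : q^2 - 4*p*r = -3 ∨ q^2 - 4*p*r = -4)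
    (x y : ℤ) (h : ¬(x = 0 ∧ y = 0)) : 0 < p*x^2 + q*x*y + r*y^2 := by
  rcases eq_or_ne y 0 with hy | hy
  · subst hy
    have hx : x ≠ 0 := by tauto
    have h1 : 0 < x^2 := by positivity
    nlinarith
  · have h0 : 0 < y^2 := by positivity
    have h1 : 1 ≤ y^2 := h0
    rcases hD with hD | hD <;> nlinarith [sq_nonneg (2*p*x + q*y)]

lemma form_represents_one {p q r : ℤ} (hp : 0 < p)
    (hD : q^2 - 4*p*r = -3 ∨ q^2 - 4*p*r = -4) :
    ∃ x y : ℤ, p*x^2 + q*x*y + r*y^2 = 1 := by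
  have hne : {n : ℕ | 0 < n ∧ ∃ x y : ℤ, p*x^2 + q*x*y + r*y^2 = (n : ℤ)}.Nonempty := by
    refine ⟨p.toNat, by omega, 1, 0, ?_⟩
    push_cast [Int.toNat_of_nonneg hp.le]; ring
  obtain ⟨m, hmS, hmin⟩ :=
    (wellFounded_lt : WellFounded ((·<·) : ℕ → ℕ → Prop)).has_min _ hne
  obtain ⟨hm0, x, y, hxy⟩ := hmS
  have hmZ : (1:ℤ) ≤ (m:ℤ) := by exact_mod_cast hm0
  have hxy0 : ¬(x = 0 ∧ y = 0) := by
    rintro ⟨rfl, rfl⟩; simp at hxy; omega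
  -- coprimality of x y
  have hg : Int.gcd x y = 1 := by
    by_contra hgne
    have hgpos : 0 < Int.gcd x y := Int.gcd_pos_iff.mpr (by tauto)
    have hg2 : 2 ≤ Int.gcd x y := by omega
    obtain ⟨x', hx'⟩ : (Int.gcd x y : ℤ) ∣ x := Int.gcd_dvd_left x y
    obtain ⟨y', hy'⟩ : (Int.gcd x y : ℤ) ∣ y := Int.gcd_dvd_right x y
    have hgZ : (2:ℤ) ≤ (Int.gcd x y : ℤ) := by exact_mod_cast hg2
    set g : ℤ := (Int.gcd x y : ℤ) with hgdef
    clear_value g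
    rw [hx', hy'] at hxy
    have hx'y' : ¬(x' = 0 ∧ y' = 0) := by
      rintro ⟨rfl, rfl⟩
      simp at hx' hy'
      exact hxy0 ⟨hx', hy'⟩
    have hpos' : 0 < p*x'^2 + q*x'*y' + r*y'^2 := form_pos hp hD _ _ hx'y'
    have hval : (p*x'^2 + q*x'*y' + r*y'^2) * g^2 = (m:ℤ) := by linear_combination hxy
    have hg4 : (4:ℤ) ≤ g^2 := by nlinarith
    have hm'lt : (p*x'^2 + q*x'*y' + r*y'^2).toNat < m := by
      have h4 : (p*x'^2 + q*x'*y' + r*y'^2) * 4 ≤ (m:ℤ) := by nlinarith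
      omega
    refine hmin (p*x'^2 + q*x'*y' + r*y'^2).toNat ⟨by omega, x', y', ?_⟩ hm'lt
    rw [Int.toNat_of_nonneg hpos'.le]
  obtain ⟨s, t, hst⟩ := Int.isCoprime_iff_gcd_eq_one.mpr hg
  clear hne hxy0 hg
  -- basis completion: x*v - y*u = 1
  obtain ⟨u, v, hdet⟩ : ∃ u v : ℤ, x*v - y*u = 1 := ⟨-t, s, by linarith [hst]⟩
  clear hst
  set Q' : ℤ := 2*p*x*u + q*(x*v + y*u) + 2*r*y*v with hQ'
  set k : ℤ := -((Q' + m) / (2*m)) with hk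
  set u' : ℤ := u + k*x with hu'
  set v' : ℤ := v + k*y with hv'
  set Q'' : ℤ := 2*p*x*u' + q*(x*v' + y*u') + 2*r*y*v' with hQ''
  set R'' : ℤ := p*u'^2 + q*u'*v' + r*v'^2 with hR''
  have hdet' : x*v' - y*u' = 1 := by rw [hu', hv']; linear_combination hdet
  have hQ''eq : Q'' = Q' + 2*m*k := by
    rw [hQ'', hu', hv', hQ']; linear_combination 2*k*hxy
  have h2m : (0:ℤ) < 2*m := by omega
  have hmod : Q'' = (Q' + m) % (2*m) - m := by
    rw [hQ''eq, hk, Int.emod_def]; ring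
  have hQlb : -(m:ℤ) ≤ Q'' := by
    have := Int.emod_nonneg (Q' + m) (by omega : (2*(m:ℤ)) ≠ 0)
    omega
  have hQub : Q'' < m := by
    have := Int.emod_lt_of_pos (Q' + m) h2m
    omega
  have hR''pos : 0 < R'' := by
    rw [hR'']
    apply form_pos hp hD
    rintro ⟨h1, h2⟩
    rw [h1, h2] at hdet'; simp at hdet'
  have hR''ge : (m:ℤ) ≤ R'' := by
    by_contra hcon
    push_neg at hcon
    refine hmin R''.toNat ⟨by omega, u', v', ?_⟩ (by omega)
    rw [Int.toNat_of_nonneg hR''pos.le, hR'']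
  have hdisc : Q''^2 - 4*(m:ℤ)*R'' = q^2 - 4*p*r := by
    have key : Q''^2 - 4*(p*x^2+q*x*y+r*y^2)*R'' = (q^2-4*p*r)*(x*v'-y*u')^2 := by
      rw [hQ'', hR'']; ring
    rw [hxy, hdet'] at key; linarith [key]
  clear_value Q' k u' v' Q'' R''
  clear hk hmod hQ''eq hdet hdet' hu' hv' hQ' hQ'' hR'' hmin
  have hQsq : Q''^2 ≤ (m:ℤ)^2 := by nlinarith [hQlb, hQub]
  have hm1 : (m:ℤ) = 1 := by
    have h3 : 3*(m:ℤ)^2 ≤ 4 := by rcases hD with hD | hD <;> nlinarith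
    nlinarith
  exact ⟨x, y, by rw [hxy, hm1]⟩

lemma form_represents_pm {p q r : ℤ} (hp : p ≠ 0)
    (hD : q^2 - 4*p*r = -3 ∨ q^2 - 4*p*r = -4) :
    ∃ x y ε : ℤ, (ε = 1 ∨ ε = -1) ∧ p*x^2 + q*x*y + r*y^2 = ε := by
  rcases lt_or_gt_of_ne hp with h | h
  · obtain ⟨x, y, hxy⟩ := form_represents_one (p := -p) (q := -q) (r := -r)
      (by omega) (by rcases hD with hD | hD
                     · exact Or.inl (by linear_combination hD)
                     · exact Or.inr (by linear_combination hD))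
    exact ⟨x, y, -1, Or.inr rfl, by linear_combination -hxy⟩
  · obtain ⟨x, y, hxy⟩ := form_represents_one h hD
    exact ⟨x, y, 1, Or.inl rfl, hxy⟩

lemma glmul (x u y v ε : ℤ) (h : x*v - y*u = ε) (hε2 : ε*ε = 1) :
    !![x,u;y,v] * (ε • !![v,-u;-y,x]) = 1 := by
  ext i j
  fin_cases i <;> fin_cases j <;>
    simp [Matrix.mul_apply, Fin.sum_univ_two, Matrix.one_apply] <;>
    first
      | ring1
      | linear_combination ε*h + hε2

lemma glmul' (x u y v ε : ℤ) (h : x*v - y*u = ε) (hε2 : ε*ε = 1) :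
    (ε • !![v,-u;-y,x]) * !![x,u;y,v] = 1 := by
  ext i j
  fin_cases i <;> fin_cases j <;>
    simp [Matrix.mul_apply, Fin.sum_univ_two, Matrix.one_apply] <;>
    first
      | ring1
      | linear_combination ε*h + hε2

/-- A `GL2` element with explicit entries, determinant `ε = ±1`. -/
def glP (x u y v ε : ℤ) (h : x*v - y*u = ε) (hε2 : ε*ε = 1) : GL2 :=
  ⟨!![x,u;y,v], ε • !![v,-u;-y,x], glmul x u y v ε h hε2, glmul' x u y v ε h hε2⟩

lemma glP_val (x u y v ε : ℤ) (h : x*v - y*u = ε) (hε2 : ε*ε = 1) :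
    (glP x u y v ε h hε2).val = !![x,u;y,v] := rfl

lemma glP_inv_val (x u y v ε : ℤ) (h : x*v - y*u = ε) (hε2 : ε*ε = 1) :
    ((glP x u y v ε h hε2)⁻¹).val = ε • !![v,-u;-y,x] := rfl

lemma companion_entries (a b c d x y ε t : ℤ) (hform : c*x^2+(d-a)*x*y-b*y^2 = ε)
    (hdet : a*d - b*c = 1) (htr : a+d = t) (hε2 : ε*ε = 1) :
    (ε • !![c*x+d*y, -(a*x+b*y); -y, x]) * (!![a,b;c,d] * !![x, a*x+b*y; y, c*x+d*y]) =
      !![0,-1;1,t] := by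
  ext i j
  fin_cases i <;> fin_cases j <;>
    simp [Matrix.mul_apply, Fin.sum_univ_two]
  · ring
  · linear_combination (-ε*(a*d-b*c)) * hform + (-(ε*ε)) * hdet + (-1) * hε2
  · linear_combination ε * hform + hε2
  · linear_combination (ε*(a+d)) * hform + (a+d) * hε2 + htr

lemma conj_to_companion (A : GL2) (t : ℤ) (htr : A.val.trace = t) (hdet : A.val.det = 1)
    (ht : t = -1 ∨ t = 0 ∨ t = 1) :
    ∃ P : GL2, (P * A * P⁻¹).val = !![0,-1;1,t] := by
  obtain ⟨a, b, c, d, hA⟩ : ∃ a b c d, A.val = !![a,b;c,d] :=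
    ⟨_, _, _, _, Matrix.eta_fin_two _⟩
  rw [hA, Matrix.trace_fin_two_of] at htr
  rw [hA, Matrix.det_fin_two_of] at hdet
  have hcne : c ≠ 0 := by
    rintro rfl
    simp at hdet
    rcases Int.eq_one_or_neg_one_of_mul_eq_one' hdet with ⟨h1, h2⟩ | ⟨h1, h2⟩ <;> omega
  have hD : (d-a)^2 - 4*c*(-b) = -3 ∨ (d-a)^2 - 4*c*(-b) = -4 := by
    rcases ht with rfl | rfl | rfl
    · left; linear_combination (a+d-1)*htr - 4*hdet
    · right; linear_combination (a+d)*htr - 4*hdet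
    · left; linear_combination (a+d+1)*htr - 4*hdet
  obtain ⟨x, y, ε, hε, hform⟩ := form_represents_pm hcne hD
  have hε2 : ε*ε = 1 := by rcases hε with rfl | rfl <;> norm_num
  have hform' : c*x^2+(d-a)*x*y-b*y^2 = ε := by linear_combination hform
  have hdetP : x*(c*x+d*y) - y*(a*x+b*y) = ε := by linear_combination hform
  refine ⟨(glP x (a*x+b*y) y (c*x+d*y) ε hdetP hε2)⁻¹, ?_⟩
  rw [inv_inv, Units.val_mul, Units.val_mul, glP_inv_val, glP_val, hA, mul_assoc]
  exact companion_entries a b c d x y ε t hform' hdet htr hε2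

lemma conj_conj (U Q A : GL2) : (U*Q)*A*(U*Q)⁻¹ = U*(Q*A*Q⁻¹)*U⁻¹ := by
  rw [mul_inv_rev]
  group

lemma conj_invol (A : GL2) (htr : A.val.trace = 0) (hdet : A.val.det = -1) :
    ∃ P : GL2, (P * A * P⁻¹).val = !![1,0;0,-1] ∨ (P * A * P⁻¹).val = !![0,1;1,0] := by
  obtain ⟨a, b, c, d, hA⟩ : ∃ a b c d, A.val = !![a,b;c,d] :=
    ⟨_, _, _, _, Matrix.eta_fin_two _⟩
  rw [hA, Matrix.trace_fin_two_of] at htr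
  rw [hA, Matrix.det_fin_two_of] at hdet
  -- Step 1: a primitive fixed vector (x,y), completed to a basis by (u,v)
  have step1 : ∃ x y u v : ℤ, x*v - y*u = 1 ∧ a*x + b*y = x ∧ c*x + d*y = y := by
    have hcop : ∃ x y : ℤ, IsCoprime x y ∧ a*x + b*y = x ∧ c*x + d*y = y := by
      rcases eq_or_ne c 0 with hc | hc
      · subst hc
        have had : a * d = -1 := by linarith [hdet]
        have hd' : d = -a := by linarith [htr]
        rw [hd'] at had
        have ha1 : a = 1 ∨ a = -1 := by
          have haa : a * a = 1 := by linear_combination -had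
          rcases Int.eq_one_or_neg_one_of_mul_eq_one' haa with ⟨h1, _⟩ | ⟨h1, _⟩ <;> tauto
        rcases ha1 with rfl | rfl
        · exact ⟨1, 0, isCoprime_one_left, by ring, by ring⟩
        · have hd1 : d = 1 := by linarith [htr]
          rcases Int.even_or_odd b with ⟨b', hb⟩ | ⟨b', hb⟩
          · refine ⟨b', 1, isCoprime_one_right, by rw [hb]; ring, by rw [hd1]; ring⟩
          · refine ⟨b, 2, ⟨1, -b', by rw [hb]; ring⟩, by rw [hb]; ring, by rw [hd1]; ring⟩
      · obtain ⟨g, hgne, x, y, hcop', hx, hy⟩ :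
            ∃ g : ℤ, g ≠ 0 ∧ ∃ x y, IsCoprime x y ∧ a+1 = g*x ∧ c = g*y := by
          have hgpos : 0 < Int.gcd (a+1) c := Int.gcd_pos_iff.mpr (Or.inr hc)
          refine ⟨(Int.gcd (a+1) c : ℤ), by exact_mod_cast hgpos.ne',
            (a+1)/(Int.gcd (a+1) c : ℤ), c/(Int.gcd (a+1) c : ℤ), ?_, ?_, ?_⟩
          · exact Int.isCoprime_iff_gcd_eq_one.mpr (Int.gcd_div_gcd_div_gcd hgpos)
          · exact (Int.mul_ediv_cancel' (Int.gcd_dvd_left (a+1) c)).symm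
          · exact (Int.mul_ediv_cancel' (Int.gcd_dvd_right (a+1) c)).symm
        refine ⟨x, y, hcop', ?_, ?_⟩
        · have e : g * (a*x + b*y - x) = 0 := by
            have e2 : g * (a*x + b*y - x) = a*(a+1) + b*c - (a+1) := by
              rw [hx, hy]; ring
            rw [e2]; linear_combination -hdet + a*htr
          rcases mul_eq_zero.mp e with h | h
          · exact absurd h hgne
          · linarith
        · have e : g * (c*x + d*y - y) = 0 := by
            have e2 : g * (c*x + d*y - y) = c*(a+1) + d*c - c := by
              rw [hx, hy]; ring
            rw [e2]; linear_combination c*htr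
          rcases mul_eq_zero.mp e with h | h
          · exact absurd h hgne
          · linarith
    obtain ⟨x, y, hcop, e1, e2⟩ := hcop
    obtain ⟨s, t, hst⟩ := hcop
    exact ⟨x, y, -t, s, by linarith [hst], e1, e2⟩
  obtain ⟨x, y, u, v, hd1, e1, e2⟩ := step1
  have h11 : (1:ℤ)*(1:ℤ) = 1 := by norm_num
  set P0 : GL2 := glP x u y v 1 hd1 h11 with hP0
  -- B = P0⁻¹ A P0 is upper triangular !![1, β; 0, -1]
  set β : ℤ := v*(a*u+b*v) - u*(c*u+d*v) with hβ
  have hB : ((P0⁻¹) * A * (P0⁻¹)⁻¹).val = !![1, β; 0, -1] := by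
    rw [inv_inv, Units.val_mul, Units.val_mul, hP0, glP_inv_val, glP_val, hA]
    ext i j
    fin_cases i <;> fin_cases j <;>
      simp [Matrix.mul_apply, Fin.sum_univ_two, hβ]
    · linear_combination v*e1 - u*e2 + hd1
    · ring
    · linear_combination (-y)*e1 + x*e2
    · linear_combination (x*v - y*u)*htr - v*e1 + u*e2 - hd1
  -- kill the even part of β
  set k : ℤ := β / 2 with hk
  set ρ : ℤ := β % 2 with hρ
  have hβk : β = 2*k + ρ := by rw [hk, hρ]; omega
  have hρ01 : ρ = 0 ∨ ρ = 1 := Int.emod_two_eq_zero_or_one β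
  set U : GL2 := glP 1 k 0 1 1 (by ring) h11 with hU
  set Q : GL2 := U * P0⁻¹ with hQ
  have hC : (Q * A * Q⁻¹).val = !![1, ρ; 0, -1] := by
    rw [hQ, conj_conj, Units.val_mul, Units.val_mul, hB, hU, glP_inv_val, glP_val]
    ext i j
    fin_cases i <;> fin_cases j <;>
      simp [Matrix.mul_apply, Fin.sum_univ_two] <;>
      linear_combination hβk
  rcases hρ01 with hρ0 | hρ1
  · exact ⟨Q, Or.inl (by rw [hC, hρ0])⟩
  · -- conjugate !![1,1;0,-1] to the swap matrix
    have hWd : (1:ℤ)*0 - 1*1 = -1 := by norm_num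
    have hW2 : (-1:ℤ)*(-1) = 1 := by norm_num
    set W : GL2 := glP 1 1 1 0 (-1) hWd hW2 with hW
    refine ⟨W * Q, Or.inr ?_⟩
    rw [conj_conj, Units.val_mul, Units.val_mul, hC, hρ1, hW, glP_inv_val, glP_val]
    decide

lemma CH (M : M2) : M * M = M.trace • M - M.det • 1 := by
  ext i j
  simp only [Matrix.mul_apply, Fin.sum_univ_two, Matrix.sub_apply, Matrix.smul_apply,
    smul_eq_mul, Matrix.trace_fin_two, Matrix.det_fin_two]
  fin_cases i <;> fin_cases j <;>
    simp [Matrix.one_apply] <;> ring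

def useq (t δ : ℤ) : ℕ → ℤ
  | 0 => 0
  | 1 => 1
  | (n+2) => t * useq t δ (n+1) - δ * useq t δ n

lemma useq_zero (t δ : ℤ) : useq t δ 0 = 0 := rfl
lemma useq_one (t δ : ℤ) : useq t δ 1 = 1 := rfl
lemma useq_two (t δ : ℤ) (n : ℕ) :
    useq t δ (n+2) = t * useq t δ (n+1) - δ * useq t δ n := rfl

lemma pow_eq (M : M2) (t δ : ℤ) (hCH : M * M = t • M - δ • 1) :
    ∀ n : ℕ, M^(n+1) = useq t δ (n+1) • M - (δ * useq t δ n) • 1 := by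
  intro n
  induction n with
  | zero => simp [useq_zero, useq_one]
  | succ n ih =>
    rw [pow_succ, ih, useq_two]
    rw [sub_mul, smul_mul_assoc, smul_mul_assoc, hCH, one_mul]
    rw [smul_sub, smul_smul, smul_smul]
    ext i j
    simp only [Matrix.sub_apply, Matrix.smul_apply, smul_eq_mul, Matrix.one_apply]
    fin_cases i <;> fin_cases j <;> simp <;> ring

lemma useq_pos (t δ : ℤ) (h : (δ = 1 ∧ 3 ≤ t) ∨ (δ = -1 ∧ 1 ≤ t)) :
    ∀ n : ℕ, 0 ≤ useq t δ n ∧ useq t δ n ≤ useq t δ (n+1) ∧ 1 ≤ useq t δ (n+1) := by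
  intro n
  induction n with
  | zero => simp [useq_zero, useq_one]
  | succ n ih =>
    obtain ⟨h1, h2, h3⟩ := ih
    rw [useq_two]
    rcases h with ⟨rfl, ht⟩ | ⟨rfl, ht⟩ <;>
      refine ⟨by linarith, ?_, ?_⟩ <;> nlinarith

lemma useq_id (n : ℕ) : useq 2 1 n = n ∧ useq 2 1 (n+1) = n+1 := by
  induction n with
  | zero => simp [useq_zero, useq_one]
  | succ n ih =>
    obtain ⟨h1, h2⟩ := ih
    refine ⟨h2, ?_⟩
    rw [useq_two, h1, h2]
    push_cast
    ring

lemma smul_entries (M : M2) (u w : ℤ) (h : u • M - w • 1 = 1) :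
    u * M 0 1 = 0 ∧ u * M 1 0 = 0 ∧ u * M 0 0 - w = 1 ∧ u * M 1 1 - w = 1 := by
  have e := fun (i j : Fin 2) => congrFun (congrFun h i) j
  simp only [Matrix.sub_apply, Matrix.smul_apply, smul_eq_mul, Matrix.one_apply] at e
  refine ⟨?_, ?_, ?_, ?_⟩
  · simpa using e 0 1
  · simpa using e 1 0
  · simpa using e 0 0
  · simpa using e 1 1

lemma unit_pow_eq_one (A : GL2) (k : ℕ) (h : A.val ^ k = 1) : A ^ k = 1 := by
  ext
  rw [Units.val_pow_eq_pow_val, h]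
  rfl

lemma pow_order_matrix (A : GL2) (h : IsOfFinOrder A) :
    ∃ n : ℕ, useq A.val.trace A.val.det (n+1) • A.val
      - (A.val.det * useq A.val.trace A.val.det n) • (1 : M2) = 1 := by
  obtain ⟨k, hk, hAk⟩ := isOfFinOrder_iff_pow_eq_one.mp h
  obtain ⟨n, rfl⟩ : ∃ n, k = n + 1 := ⟨k - 1, by omega⟩
  refine ⟨n, ?_⟩
  rw [← pow_eq A.val _ _ (CH A.val) n]
  have : (A ^ (n+1)).val = (1 : GL2).val := by rw [hAk]
  rw [Units.val_pow_eq_pow_val] at this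
  simpa using this

lemma neg_finite_order (A : GL2) (h : IsOfFinOrder A) : IsOfFinOrder (-A) := by
  obtain ⟨k, hk, hAk⟩ := isOfFinOrder_iff_pow_eq_one.mp h
  refine isOfFinOrder_iff_pow_eq_one.mpr ⟨2*k, by omega, ?_⟩
  rw [Even.neg_pow ⟨k, by ring⟩, mul_comm, pow_mul, hAk, one_pow]

lemma trace_neg (A : GL2) : (-A).val.trace = -A.val.trace := by
  rw [Units.val_neg, Matrix.trace_neg]

lemma det_neg (A : GL2) : (-A).val.det = A.val.det := by
  rw [Units.val_neg, Matrix.det_neg]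
  simp

lemma scalar_case (A : GL2) (h : IsOfFinOrder A) (hδ : A.val.det = 1)
    (ht : A.val.trace = 2) : A = 1 := by
  obtain ⟨n, hpow⟩ := pow_order_matrix A h
  rw [hδ, ht] at hpow
  rw [(useq_id n).1, (useq_id n).2] at hpow
  obtain ⟨e01, e10, e00, e11⟩ := smul_entries _ _ _ hpow
  have hne : ((n:ℤ)+1) ≠ 0 := by push_cast; omega
  have hb : A.val 0 1 = 0 := by
    rcases mul_eq_zero.mp e01 with h' | h'
    · exact absurd (by push_cast at h' ⊢; linarith : ((n:ℤ)+1) = 0) hne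
    · exact h'
  have hc : A.val 1 0 = 0 := by
    rcases mul_eq_zero.mp e10 with h' | h'
    · exact absurd (by push_cast at h' ⊢; linarith : ((n:ℤ)+1) = 0) hne
    · exact h'
  have ha : A.val 0 0 = 1 := by
    have h' : ((n:ℤ)+1) * A.val 0 0 = ((n:ℤ)+1) * 1 := by push_cast at e00 ⊢; linarith
    exact mul_left_cancel₀ hne h'
  have hd : A.val 1 1 = 1 := by
    have h' : ((n:ℤ)+1) * A.val 1 1 = ((n:ℤ)+1) * 1 := by push_cast at e11 ⊢; linarith
    exact mul_left_cancel₀ hne h'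
  have : A.val = 1 := by
    rw [Matrix.eta_fin_two A.val, ha, hb, hc, hd]
    exact Matrix.one_fin_two.symm
  ext
  rw [this]
  rfl

lemma elim_big (A : GL2) (h : IsOfFinOrder A)
    (hyp : (A.val.det = 1 ∧ 3 ≤ A.val.trace) ∨ (A.val.det = -1 ∧ 1 ≤ A.val.trace)) :
    False := by
  obtain ⟨n, hpow⟩ := pow_order_matrix A h
  set t := A.val.trace with ht
  set δ := A.val.det with hδ
  obtain ⟨e01, e10, e00, e11⟩ := smul_entries _ _ _ hpow
  have hyp' : (δ = 1 ∧ 3 ≤ t) ∨ (δ = -1 ∧ 1 ≤ t) := hyp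
  have hu : 1 ≤ useq t δ (n+1) := (useq_pos t δ hyp' n).2.2
  have hune : useq t δ (n+1) ≠ 0 := by omega
  have hb : A.val 0 1 = 0 := by
    rcases mul_eq_zero.mp e01 with h' | h'
    · exact absurd h' hune
    · exact h'
  have hc : A.val 1 0 = 0 := by
    rcases mul_eq_zero.mp e10 with h' | h'
    · exact absurd h' hune
    · exact h'
  have had : A.val 0 0 = A.val 1 1 := by
    have : useq t δ (n+1) * A.val 0 0 = useq t δ (n+1) * A.val 1 1 := by omega
    exact mul_left_cancel₀ hune this
  have hdet2 : δ = A.val 0 0 * A.val 1 1 := by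
    rw [hδ, Matrix.det_fin_two, hb, hc]; ring
  rw [← had] at hdet2
  have htr2 : t = A.val 0 0 + A.val 1 1 := Matrix.trace_fin_two _
  rw [← had] at htr2
  rcases hyp' with ⟨h1, h2⟩ | ⟨h1, h2⟩
  · rw [h1] at hdet2
    rcases Int.eq_one_or_neg_one_of_mul_eq_one' hdet2.symm with ⟨ha, _⟩ | ⟨ha, _⟩ <;>
      rw [ha] at htr2 <;> omega
  · rw [h1] at hdet2
    nlinarith [sq_nonneg (A.val 0 0)]

lemma classify (A : GL2) (h : IsOfFinOrder A) :
    A = 1 ∨ A = -1 ∨ (A.val.det = -1 ∧ A.val.trace = 0) ∨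
      (A.val.det = 1 ∧ (A.val.trace = -1 ∨ A.val.trace = 0 ∨ A.val.trace = 1)) := by
  have hdu : IsUnit A.val.det := A.isUnit.map Matrix.detMonoidHom
  rw [Int.isUnit_iff] at hdu
  have hnA := neg_finite_order A h
  rcases hdu with hδ | hδ
  · -- det = 1
    have h1 : ¬ (3 ≤ A.val.trace) := fun hge => elim_big A h (Or.inl ⟨hδ, hge⟩)
    have h2 : ¬ (A.val.trace ≤ -3) := by
      intro hle
      exact elim_big (-A) hnA (Or.inl ⟨by rw [det_neg]; exact hδ,
        by rw [trace_neg]; omega⟩)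
    -- trace ∈ [-2,2]
    rcases (by omega : A.val.trace = -2 ∨ A.val.trace = -1 ∨ A.val.trace = 0 ∨
        A.val.trace = 1 ∨ A.val.trace = 2) with h3 | h3 | h3 | h3 | h3
    · -- A = -1
      right; left
      have hone := scalar_case (-A) hnA (by rw [det_neg]; exact hδ)
        (by rw [trace_neg, h3]; norm_num)
      rw [← neg_neg A, hone]
    · exact Or.inr (Or.inr (Or.inr ⟨hδ, Or.inl h3⟩))
    · exact Or.inr (Or.inr (Or.inr ⟨hδ, Or.inr (Or.inl h3)⟩))
    · exact Or.inr (Or.inr (Or.inr ⟨hδ, Or.inr (Or.inr h3)⟩))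
    · left
      exact scalar_case A h hδ h3
  · -- det = -1
    have h1 : ¬ (1 ≤ A.val.trace) := fun hge => elim_big A h (Or.inr ⟨hδ, hge⟩)
    have h2 : ¬ (A.val.trace ≤ -1) := by
      intro hle
      exact elim_big (-A) hnA (Or.inr ⟨by rw [det_neg]; exact hδ,
        by rw [trace_neg]; omega⟩)
    exact Or.inr (Or.inr (Or.inl ⟨hδ, by omega⟩))

/-- An element of `GL(2,ℤ)` from a matrix and an explicit inverse. -/
def mkGL (M N : Matrix (Fin 2) (Fin 2) ℤ) (h1 : M * N = 1) (h2 : N * M = 1) :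
    Matrix.GeneralLinearGroup (Fin 2) ℤ :=
  ⟨M, N, h1, h2⟩

/-- Representatives of the 7 conjugacy classes of pairs `{A, A⁻¹}` of finite-order
elements of `GL(2,ℤ)`: `I`, `−I`, `diag(1,−1)`, `[[0,1],[1,0]]`, `[[0,−1],[1,0]]`,
`[[0,−1],[1,−1]]`, `[[1,−1],[1,0]]`. -/
def glReps : Fin 7 → Matrix.GeneralLinearGroup (Fin 2) ℤ :=
  ![mkGL !![1, 0; 0, 1] !![1, 0; 0, 1] (by decide) (by decide),
    mkGL !![-1, 0; 0, -1] !![-1, 0; 0, -1] (by decide) (by decide),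
    mkGL !![1, 0; 0, -1] !![1, 0; 0, -1] (by decide) (by decide),
    mkGL !![0, 1; 1, 0] !![0, 1; 1, 0] (by decide) (by decide),
    mkGL !![0, -1; 1, 0] !![0, 1; -1, 0] (by decide) (by decide),
    mkGL !![0, -1; 1, -1] !![-1, 1; -1, 0] (by decide) (by decide),
    mkGL !![1, -1; 1, 0] !![0, 1; -1, 1] (by decide) (by decide)]

-- ## order bound
lemma order_le6 (A : GL2) (h : IsOfFinOrder A) : orderOf A ≤ 6 := by
  rcases classify A h with rfl | rfl | ⟨hδ, ht⟩ | ⟨hδ, ht⟩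
  · simp
  · have h2 : (-1 : GL2)^2 = 1 := by rw [neg_one_sq]
    exact le_trans (orderOf_le_of_pow_eq_one (by norm_num) h2) (by norm_num)
  · have hM : A.val * A.val = 1 := by
      have hch := CH A.val; rw [hδ, ht] at hch; simpa using hch
    have h2 : A^2 = 1 := unit_pow_eq_one A 2 (by rw [pow_two]; exact hM)
    exact le_trans (orderOf_le_of_pow_eq_one (by norm_num) h2) (by norm_num)
  · rcases ht with ht | ht | ht
    · -- trace -1, order 3
      have h2 : A.val * A.val = -A.val - 1 := by
        have hch := CH A.val; rw [hδ, ht] at hch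
        simpa using hch
      have h3 : A.val * A.val * A.val = 1 := by
        rw [h2, sub_mul, neg_mul, h2]; noncomm_ring
      have h3' : A^3 = 1 := unit_pow_eq_one A 3 (by rw [pow_succ, pow_two]; exact h3)
      exact le_trans (orderOf_le_of_pow_eq_one (by norm_num) h3') (by norm_num)
    · -- trace 0, order 4
      have h2 : A.val * A.val = -1 := by
        have hch := CH A.val; rw [hδ, ht] at hch; simpa using hch
      have h4 : A.val^4 = 1 := by
        have e : A.val^4 = (A.val * A.val) * (A.val * A.val) := by noncomm_ring
        rw [e, h2]; simp
      exact le_trans (orderOf_le_of_pow_eq_one (by norm_num) (unit_pow_eq_one A 4 h4))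
        (by norm_num)
    · -- trace 1, order 6
      have h2 : A.val * A.val = A.val - 1 := by
        have hch := CH A.val; rw [hδ, ht] at hch; simpa using hch
      have h3 : A.val * A.val * A.val = -1 := by
        rw [h2, sub_mul, h2]; noncomm_ring
      have h6 : A.val^6 = 1 := by
        have e : A.val^6 = (A.val * A.val * A.val) * (A.val * A.val * A.val) := by
          noncomm_ring
        rw [e, h3]; simp
      exact orderOf_le_of_pow_eq_one (by norm_num) (unit_pow_eq_one A 6 h6)

-- ## orders of the representatives
lemma rep_order (i : Fin 7) (n : ℕ) (hn : 0 < n) (h1 : (glReps i).val ^ n = 1)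
    (h2 : ∀ m, m < n → 0 < m → ¬ ((glReps i).val ^ m = 1)) : orderOf (glReps i) = n := by
  rw [orderOf_eq_iff hn]
  refine ⟨unit_pow_eq_one _ n h1, ?_⟩
  intro m hm hm0 hcon
  exact h2 m hm hm0 (by rw [← Units.val_pow_eq_pow_val, hcon, Units.val_one])

-- ## invariants
def phi2 : M2 →+* Matrix (Fin 2) (Fin 2) (ZMod 2) := (Int.castRingHom (ZMod 2)).mapMatrix

def dets : Fin 7 → ℤ := ![1, 1, -1, -1, 1, 1, 1]
def trs : Fin 7 → ℤ := ![2, -2, 0, 0, 0, -1, 1]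
def m2v : Fin 7 → Bool := ![true, true, true, false, false, false, false]

lemma conj_det_trace {A B : GL2} (P : GL2) (h : P * A * P⁻¹ = B) :
    A.val.det = B.val.det ∧ A.val.trace = B.val.trace := by
  have hval : B.val = P.val * A.val * (P⁻¹).val := by
    rw [← h, Units.val_mul, Units.val_mul]
  have hPP : (P.val) * ((P⁻¹).val) = 1 := by
    rw [← Units.val_mul, mul_inv_cancel, Units.val_one]
  constructor
  · rw [hval, Matrix.det_mul, Matrix.det_mul]
    have h1 : (P.val).det * ((P⁻¹).val).det = 1 := by
      rw [← Matrix.det_mul, hPP, Matrix.det_one]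
    linear_combination (-(A.val).det) * h1
  · rw [hval, Matrix.trace_mul_comm (P.val * A.val) ((P⁻¹).val), ← mul_assoc,
      ← Units.val_mul, inv_mul_cancel, Units.val_one, one_mul]

lemma conj_mod2_one {A B : GL2} (P : GL2) (h : P * A * P⁻¹ = B)
    (hA : phi2 A.val = 1) : phi2 B.val = 1 := by
  have hval : B.val = P.val * A.val * (P⁻¹).val := by
    rw [← h, Units.val_mul, Units.val_mul]
  have hPP : (P.val) * ((P⁻¹).val) = 1 := by
    rw [← Units.val_mul, mul_inv_cancel, Units.val_one]
  rw [hval, map_mul, map_mul, hA, mul_one, ← map_mul, hPP, map_one]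

lemma rep_facts (A : GL2) (i : Fin 7)
    (h : ∃ P : GL2, P * A * P⁻¹ = glReps i ∨ P * A * P⁻¹ = (glReps i)⁻¹) :
    A.val.det = dets i ∧ A.val.trace = trs i ∧ (phi2 A.val = 1 ↔ m2v i = true) := by
  have hdets : ∀ k : Fin 7, (glReps k).val.det = dets k := by decide
  have hdets' : ∀ k : Fin 7, ((glReps k)⁻¹).val.det = dets k := by decide
  have htrs : ∀ k : Fin 7, (glReps k).val.trace = trs k := by decide
  have htrs' : ∀ k : Fin 7, ((glReps k)⁻¹).val.trace = trs k := by decide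
  have hm2 : ∀ k : Fin 7, (phi2 (glReps k).val = 1) ↔ (m2v k = true) := by decide
  have hm2' : ∀ k : Fin 7, (phi2 ((glReps k)⁻¹).val = 1) ↔ (m2v k = true) := by decide
  obtain ⟨P, h | h⟩ := h
  · obtain ⟨h1, h2⟩ := conj_det_trace P h
    have hback : P⁻¹ * (glReps i) * (P⁻¹)⁻¹ = A := by rw [← h]; group
    refine ⟨h1.trans (hdets i), h2.trans (htrs i), ?_⟩
    constructor
    · intro hφ; exact (hm2 i).mp (conj_mod2_one P h hφ)
    · intro hb; exact conj_mod2_one (P⁻¹) hback ((hm2 i).mpr hb)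
  · obtain ⟨h1, h2⟩ := conj_det_trace P h
    have hback : P⁻¹ * ((glReps i)⁻¹) * (P⁻¹)⁻¹ = A := by rw [← h]; group
    refine ⟨h1.trans (hdets' i), h2.trans (htrs' i), ?_⟩
    constructor
    · intro hφ; exact (hm2' i).mp (conj_mod2_one P h hφ)
    · intro hb; exact conj_mod2_one (P⁻¹) hback ((hm2' i).mpr hb)

lemma reps_distinct (A : GL2) (i j : Fin 7)
    (hi : ∃ P : GL2, P * A * P⁻¹ = glReps i ∨ P * A * P⁻¹ = (glReps i)⁻¹)
    (hj : ∃ P : GL2, P * A * P⁻¹ = glReps j ∨ P * A * P⁻¹ = (glReps j)⁻¹) : i = j := by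
  obtain ⟨d1, t1, m1⟩ := rep_facts A i hi
  obtain ⟨d2, t2, m2'⟩ := rep_facts A j hj
  have hd : dets i = dets j := by rw [← d1, ← d2]
  have ht : trs i = trs j := by rw [← t1, ← t2]
  have hm : (m2v i = true) ↔ (m2v j = true) := m1.symm.trans m2'
  exact (by decide : ∀ i j : Fin 7, dets i = dets j → trs i = trs j →
    ((m2v i = true) ↔ (m2v j = true)) → i = j) i j hd ht hm

/-- Every finite-order element of `GL(2,ℤ)` has order at most 6, the seven listed
representatives have orders `1, 2, 2, 2, 4, 3, 6`, and every finite-order element is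
conjugate, up to inversion, to exactly one of the seven representatives. -/
theorem GL2Z_finite_order_pairs :
    (∀ A : Matrix.GeneralLinearGroup (Fin 2) ℤ, IsOfFinOrder A → orderOf A ≤ 6) ∧
    (orderOf (glReps 0) = 1 ∧ orderOf (glReps 1) = 2 ∧ orderOf (glReps 2) = 2 ∧
      orderOf (glReps 3) = 2 ∧ orderOf (glReps 4) = 4 ∧ orderOf (glReps 5) = 3 ∧
      orderOf (glReps 6) = 6) ∧
    (∀ A : Matrix.GeneralLinearGroup (Fin 2) ℤ, IsOfFinOrder A →
      ∃! i : Fin 7, ∃ P : Matrix.GeneralLinearGroup (Fin 2) ℤ,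
        P * A * P⁻¹ = glReps i ∨ P * A * P⁻¹ = (glReps i)⁻¹) := by
  refine ⟨order_le6, ⟨?_, ?_, ?_, ?_, ?_, ?_, ?_⟩, ?_⟩
  · exact rep_order 0 1 (by norm_num) (by decide) (by intro m hm hm0; omega)
  · exact rep_order 1 2 (by norm_num) (by decide)
      (by intro m hm hm0; interval_cases m <;> decide)
  · exact rep_order 2 2 (by norm_num) (by decide)
      (by intro m hm hm0; interval_cases m <;> decide)
  · exact rep_order 3 2 (by norm_num) (by decide)
      (by intro m hm hm0; interval_cases m <;> decide)
  · exact rep_order 4 4 (by norm_num) (by decide)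
      (by intro m hm hm0; interval_cases m <;> decide)
  · exact rep_order 5 3 (by norm_num) (by decide)
      (by intro m hm hm0; interval_cases m <;> decide)
  · exact rep_order 6 6 (by norm_num) (by decide)
      (by intro m hm hm0; interval_cases m <;> decide)
  · intro A hA
    have hex : ∃ i : Fin 7, ∃ P : GL2,
        P * A * P⁻¹ = glReps i ∨ P * A * P⁻¹ = (glReps i)⁻¹ := by
      rcases classify A hA with rfl | rfl | ⟨hδ, ht⟩ | ⟨hδ, ht⟩
      · refine ⟨0, 1, Or.inl ?_⟩
        have g0 : glReps 0 = 1 := Units.ext (by decide)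
        rw [g0]; simp
      · refine ⟨1, 1, Or.inl ?_⟩
        have g1 : glReps 1 = -1 := Units.ext (by decide)
        rw [g1]; simp
      · obtain ⟨P, hP | hP⟩ := conj_invol A ht hδ
        · exact ⟨2, P, Or.inl (Units.ext (hP.trans (by decide)))⟩
        · exact ⟨3, P, Or.inl (Units.ext (hP.trans (by decide)))⟩
      · rcases ht with ht | ht | ht
        · obtain ⟨P, hP⟩ := conj_to_companion A (-1) ht hδ (Or.inl rfl)
          exact ⟨5, P, Or.inl (Units.ext (hP.trans (by decide)))⟩
        · obtain ⟨P, hP⟩ := conj_to_companion A 0 ht hδ (Or.inr (Or.inl rfl))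
          exact ⟨4, P, Or.inl (Units.ext (hP.trans (by decide)))⟩
        · obtain ⟨P, hP⟩ := conj_to_companion A 1 ht hδ (Or.inr (Or.inr rfl))
          have hD2 : (-1 : ℤ) * 1 - 0 * 0 = -1 := by norm_num
          have hDe : (-1 : ℤ) * (-1) = 1 := by norm_num
          refine ⟨6, glP (-1) 0 0 1 (-1) hD2 hDe * P, Or.inr (Units.ext ?_)⟩
          rw [conj_conj, Units.val_mul, Units.val_mul, hP, glP_val, glP_inv_val]
          decide
    obtain ⟨i, hi⟩ := hex
    exact ⟨i, hi, fun j hj => reps_distinct A j i hj hi⟩
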